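/- arXiv:1502.05453 — 9 statements merged into one kernel-verified Lean document; each statement's English description precedes it below -/
import Mathlib

section
/- Let p, q ≥ 3 be integers and let A, B ∈ SL(2,ℂ) satisfy tr A = 2cos(π/p) and tr B = 2cos(π/q). Set γ = tr(ABA⁻¹B⁻¹) − 2, λ = tr(A)·tr(B)·tr(AB), a = 8cos(π/p)cos(π/q)cos(π/p + π/q), b = 16cos²(π/p)cos²(π/q), c = 4sin(2π/p)sin(2π/q), and ε = λ − a. Then b·γ = ε·(ε − c). -/
/-!
By the Fricke identity, `γ = x² + y² + z² - xyz - 4` where `x = tr A`, `y = tr B`, `z = tr AB`,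
so with `λ = xyz` and `b = x²y²` both `b γ` and `ε (ε - c)` are quadratic polynomials in `λ`
with leading coefficient `1`. Their linear and constant coefficients agree because
`2a + c = b` and `a (a + c) = b (x² + y² - 4)`; for `x = 2 cos θ`, `y = 2 cos φ` these are the
trigonometric identities `a + c = 8 cos θ cos φ cos (θ - φ)` and
`cos (θ + φ) cos (θ - φ) = cos² θ + cos² φ - 1`.
-/

open scoped Real

namespace Matrix.SpecialLinearGroup

theorem trace_commutator {R : Type*} [CommRing R] (A B : SpecialLinearGroup (Fin 2) R) :
    trace ((A * B * A⁻¹ * B⁻¹ : SpecialLinearGroup (Fin 2) R) : Matrix (Fin 2) (Fin 2) R) =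
      trace (A : Matrix (Fin 2) (Fin 2) R) ^ 2 + trace (B : Matrix (Fin 2) (Fin 2) R) ^ 2 +
        trace ((A * B : SpecialLinearGroup (Fin 2) R) : Matrix (Fin 2) (Fin 2) R) ^ 2 -
        trace (A : Matrix (Fin 2) (Fin 2) R) * trace (B : Matrix (Fin 2) (Fin 2) R) *
          trace ((A * B : SpecialLinearGroup (Fin 2) R) : Matrix (Fin 2) (Fin 2) R) - 2 := by
  have hA := A.prop
  have hB := B.prop
  rw [det_fin_two] at hA hB
  simp only [coe_mul, coe_inv, adjugate_fin_two, trace_fin_two, mul_apply, Fin.sum_univ_two,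
    of_apply, cons_val', cons_val_zero, cons_val_one, empty_val', cons_val_fin_one]
  set a := (A : Matrix (Fin 2) (Fin 2) R)
  set b := (B : Matrix (Fin 2) (Fin 2) R)
  linear_combination ((b 0 0 + b 1 1) ^ 2 - 2) * hA +
    ((a 0 0 + a 1 1) ^ 2 - 2 * (a 0 0 * a 1 1 - a 0 1 * a 1 0)) * hB

end Matrix.SpecialLinearGroup

theorem sq_mul_sq_mul_eq_mul_sub_of_two_mul_add_eq {R : Type*} [CommRing R] {x y z a c : R}
    (hsum : 2 * a + c = x ^ 2 * y ^ 2) (hprod : a * (a + c) = x ^ 2 * y ^ 2 * (x ^ 2 + y ^ 2 - 4)) :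
    x ^ 2 * y ^ 2 * (x ^ 2 + y ^ 2 + z ^ 2 - x * y * z - 4) =
      (x * y * z - a) * (x * y * z - a - c) := by
  linear_combination x * y * z * hsum - hprod

namespace Real

theorem two_mul_cos_mul_cos_mul_cos_add_add_sin_two_mul_mul_sin_two_mul (θ φ : ℝ) :
    2 * (8 * cos θ * cos φ * cos (θ + φ)) + 4 * sin (2 * θ) * sin (2 * φ) =
      (2 * cos θ) ^ 2 * (2 * cos φ) ^ 2 := by
  rw [cos_add, sin_two_mul, sin_two_mul]
  ring

theorem cos_mul_cos_mul_cos_add_mul_add_sin_two_mul_mul_sin_two_mul (θ φ : ℝ) :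
    8 * cos θ * cos φ * cos (θ + φ) *
        (8 * cos θ * cos φ * cos (θ + φ) + 4 * sin (2 * θ) * sin (2 * φ)) =
      (2 * cos θ) ^ 2 * (2 * cos φ) ^ 2 * ((2 * cos θ) ^ 2 + (2 * cos φ) ^ 2 - 4) := by
  have hcos_add_mul_cos_sub : cos (θ + φ) * cos (θ - φ) = cos θ ^ 2 + cos φ ^ 2 - 1 := by
    rw [cos_add, cos_sub]
    linear_combination
      (-sin φ ^ 2) * sin_sq_add_cos_sq θ + (cos θ ^ 2 - 1) * sin_sq_add_cos_sq φ
  have hsum : 8 * cos θ * cos φ * cos (θ + φ) + 4 * sin (2 * θ) * sin (2 * φ) =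
      8 * cos θ * cos φ * cos (θ - φ) := by
    rw [cos_add, cos_sub, sin_two_mul, sin_two_mul]
    ring
  rw [hsum]
  linear_combination 64 * cos θ ^ 2 * cos φ ^ 2 * hcos_add_mul_cos_sub

end Real

theorem stmt_1_general (p q : ℕ)
    (A B : Matrix.SpecialLinearGroup (Fin 2) ℂ)
    (hA : Matrix.trace (A : Matrix (Fin 2) (Fin 2) ℂ) = ((2 * Real.cos (π / p) : ℝ) : ℂ))
    (hB : Matrix.trace (B : Matrix (Fin 2) (Fin 2) ℂ) = ((2 * Real.cos (π / q) : ℝ) : ℂ))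
    (γ lam a b c ε : ℂ)
    (hγ : γ = Matrix.trace ((A * B * A⁻¹ * B⁻¹ : Matrix.SpecialLinearGroup (Fin 2) ℂ) :
      Matrix (Fin 2) (Fin 2) ℂ) - 2)
    (hlam : lam = Matrix.trace (A : Matrix (Fin 2) (Fin 2) ℂ) *
      Matrix.trace (B : Matrix (Fin 2) (Fin 2) ℂ) *
      Matrix.trace ((A * B : Matrix.SpecialLinearGroup (Fin 2) ℂ) : Matrix (Fin 2) (Fin 2) ℂ))
    (ha : a = ((8 * Real.cos (π / p) * Real.cos (π / q) * Real.cos (π / p + π / q) : ℝ) : ℂ))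
    (hb : b = ((16 * Real.cos (π / p) ^ 2 * Real.cos (π / q) ^ 2 : ℝ) : ℂ))
    (hc : c = ((4 * Real.sin (2 * π / p) * Real.sin (2 * π / q) : ℝ) : ℂ))
    (hε : ε = lam - a) :
    b * γ = ε * (ε - c) := by
  rw [mul_div_assoc, mul_div_assoc] at hc
  have hsum :=
    Real.two_mul_cos_mul_cos_mul_cos_add_add_sin_two_mul_mul_sin_two_mul (π / p) (π / q)
  have hprod :=
    Real.cos_mul_cos_mul_cos_add_mul_add_sin_two_mul_mul_sin_two_mul (π / p) (π / q)
  apply_fun ((↑) : ℝ → ℂ) at hsum hprod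
  push_cast at hsum hprod
  have key := sq_mul_sq_mul_eq_mul_sub_of_two_mul_add_eq
    (z := ((A * B : Matrix.SpecialLinearGroup (Fin 2) ℂ) : Matrix (Fin 2) (Fin 2) ℂ).trace)
    hsum hprod
  rw [hγ, Matrix.SpecialLinearGroup.trace_commutator, hε, hlam, hA, hB, ha, hb, hc]
  push_cast
  linear_combination key

/-- Let p, q ≥ 3 and A, B ∈ SL(2,ℂ) with tr A = 2cos(π/p), tr B = 2cos(π/q).
With γ = tr(ABA⁻¹B⁻¹) − 2, λ = tr(A)tr(B)tr(AB), a = 8cos(π/p)cos(π/q)cos(π/p+π/q),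
b = 16cos²(π/p)cos²(π/q), c = 4sin(2π/p)sin(2π/q), ε = λ − a, one has b·γ = ε·(ε − c). -/
theorem stmt_1 (p q : ℕ) (hp : 3 ≤ p) (hq : 3 ≤ q)
    (A B : Matrix.SpecialLinearGroup (Fin 2) ℂ)
    (hA : Matrix.trace (A : Matrix (Fin 2) (Fin 2) ℂ) = ((2 * Real.cos (π / p) : ℝ) : ℂ))
    (hB : Matrix.trace (B : Matrix (Fin 2) (Fin 2) ℂ) = ((2 * Real.cos (π / q) : ℝ) : ℂ))
    (γ lam a b c ε : ℂ)
    (hγ : γ = Matrix.trace ((A * B * A⁻¹ * B⁻¹ : Matrix.SpecialLinearGroup (Fin 2) ℂ) :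
      Matrix (Fin 2) (Fin 2) ℂ) - 2)
    (hlam : lam = Matrix.trace (A : Matrix (Fin 2) (Fin 2) ℂ) *
      Matrix.trace (B : Matrix (Fin 2) (Fin 2) ℂ) *
      Matrix.trace ((A * B : Matrix.SpecialLinearGroup (Fin 2) ℂ) : Matrix (Fin 2) (Fin 2) ℂ))
    (ha : a = ((8 * Real.cos (π / p) * Real.cos (π / q) * Real.cos (π / p + π / q) : ℝ) : ℂ))
    (hb : b = ((16 * Real.cos (π / p) ^ 2 * Real.cos (π / q) ^ 2 : ℝ) : ℂ))
    (hc : c = ((4 * Real.sin (2 * π / p) * Real.sin (2 * π / q) : ℝ) : ℂ))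
    (hε : ε = lam - a) :
    b * γ = ε * (ε - c) :=
  stmt_1_general p q A B hA hB γ lam a b c ε hγ hlam ha hb hc hε
end

section
/- Let p, q ≥ 2 be integers and w ∈ ℂ with w ≠ 0. For the matrices A = [[cos(π/p), i sin(π/p)], [i sin(π/p), cos(π/p)]] and B = [[cos(π/q), i w sin(π/q)], [i w⁻¹ sin(π/q), cos(π/q)]] in SL(2,ℂ), one has tr(ABA⁻¹B⁻¹) − 2 = sin²(π/p)·sin²(π/q)·(w − 1/w)². -/
/-!
By the Fricke identity, the trace of a commutator in `SL(2, R)` is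
`tr [g, h] = (tr g)² + (tr h)² + (tr gh)² - tr g · tr h · tr gh - 2`.
Here `tr A = 2 cos(π/p)`, `tr B = 2 cos(π/q)` and
`tr AB = 2 cos(π/p) cos(π/q) - sin(π/p) sin(π/q) (w + w⁻¹)`; substituting, the terms without
sines collapse to `-4 sin²(π/p) sin²(π/q)`, and `(w + w⁻¹)² - 4 = (w - w⁻¹)²`.
-/

open scoped Real

namespace Matrix

theorem trace_mul_mul_adjugate_mul_adjugate_fin_two {R : Type*} [CommRing R]
    (M N : Matrix (Fin 2) (Fin 2) R) :
    trace (M * N * adjugate M * adjugate N) =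
      N.det * M.trace ^ 2 + M.det * N.trace ^ 2 + (M * N).trace ^ 2
        - M.trace * N.trace * (M * N).trace - 2 * M.det * N.det := by
  rw [eta_fin_two M, eta_fin_two N]
  simp only [adjugate_fin_two_of, mul_fin_two, trace_fin_two_of, det_fin_two_of]
  ring

namespace SpecialLinearGroup

open scoped MatrixGroups

theorem trace_commutator_fin_two {R : Type*} [CommRing R] (g h : SL(2, R)) :
    trace ((g * h * g⁻¹ * h⁻¹ : SL(2, R)) : Matrix (Fin 2) (Fin 2) R) =
      trace (g : Matrix (Fin 2) (Fin 2) R) ^ 2 + trace (h : Matrix (Fin 2) (Fin 2) R) ^ 2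
        + trace ((g * h : SL(2, R)) : Matrix (Fin 2) (Fin 2) R) ^ 2
        - trace (g : Matrix (Fin 2) (Fin 2) R) * trace (h : Matrix (Fin 2) (Fin 2) R)
          * trace ((g * h : SL(2, R)) : Matrix (Fin 2) (Fin 2) R) - 2 := by
  rw [coe_mul, coe_mul, coe_mul, coe_inv, coe_inv, trace_mul_mul_adjugate_mul_adjugate_fin_two,
    det_coe, det_coe]
  ring

end SpecialLinearGroup

end Matrix

open Matrix Matrix.SpecialLinearGroup MatrixGroups in
theorem stmt_2_general (p q : ℕ) (w : ℂ) (hw : w ≠ 0)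
    (A B : Matrix.SpecialLinearGroup (Fin 2) ℂ)
    (hA : (A : Matrix (Fin 2) (Fin 2) ℂ) =
      !![((Real.cos (π / p) : ℝ) : ℂ), Complex.I * ((Real.sin (π / p) : ℝ) : ℂ);
         Complex.I * ((Real.sin (π / p) : ℝ) : ℂ), ((Real.cos (π / p) : ℝ) : ℂ)])
    (hB : (B : Matrix (Fin 2) (Fin 2) ℂ) =
      !![((Real.cos (π / q) : ℝ) : ℂ), Complex.I * w * ((Real.sin (π / q) : ℝ) : ℂ);
         Complex.I * w⁻¹ * ((Real.sin (π / q) : ℝ) : ℂ), ((Real.cos (π / q) : ℝ) : ℂ)]) :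
    Matrix.trace ((A * B * A⁻¹ * B⁻¹ : Matrix.SpecialLinearGroup (Fin 2) ℂ) :
      Matrix (Fin 2) (Fin 2) ℂ) - 2 =
      ((Real.sin (π / p) ^ 2 : ℝ) : ℂ) * ((Real.sin (π / q) ^ 2 : ℝ) : ℂ) * (w - 1 / w) ^ 2 := by
  rw [Complex.ofReal_pow, Complex.ofReal_pow]
  have hps : ((Real.cos (π / p) : ℝ) : ℂ) ^ 2 + ((Real.sin (π / p) : ℝ) : ℂ) ^ 2 = 1 :=
    mod_cast Real.cos_sq_add_sin_sq _
  have hqs : ((Real.cos (π / q) : ℝ) : ℂ) ^ 2 + ((Real.sin (π / q) : ℝ) : ℂ) ^ 2 = 1 :=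
    mod_cast Real.cos_sq_add_sin_sq _
  set a : ℂ := ((Real.cos (π / p) : ℝ) : ℂ)
  set s : ℂ := ((Real.sin (π / p) : ℝ) : ℂ)
  set b : ℂ := ((Real.cos (π / q) : ℝ) : ℂ)
  set t : ℂ := ((Real.sin (π / q) : ℝ) : ℂ)
  have htrA : trace (A : Matrix (Fin 2) (Fin 2) ℂ) = 2 * a := by
    rw [hA, trace_fin_two_of]; ring
  have htrB : trace (B : Matrix (Fin 2) (Fin 2) ℂ) = 2 * b := by
    rw [hB, trace_fin_two_of]; ring
  have htrAB : trace ((A * B : SL(2, ℂ)) : Matrix (Fin 2) (Fin 2) ℂ)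
      = 2 * a * b - s * t * (w + w⁻¹) := by
    rw [coe_mul, hA, hB, mul_fin_two, trace_fin_two_of]
    linear_combination s * t * (w + w⁻¹) * Complex.I_sq
  rw [trace_commutator_fin_two, htrA, htrB, htrAB]
  linear_combination 4 * (1 - b ^ 2) * hps + 4 * s ^ 2 * hqs + 4 * s ^ 2 * t ^ 2 * mul_inv_cancel₀ hw

/-- For p, q ≥ 2, w ≠ 0, and A = [[cos(π/p), i sin(π/p)],[i sin(π/p), cos(π/p)]],
B = [[cos(π/q), i w sin(π/q)],[i w⁻¹ sin(π/q), cos(π/q)]] in SL(2,ℂ), one has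
tr(ABA⁻¹B⁻¹) − 2 = sin²(π/p)·sin²(π/q)·(w − 1/w)². -/
theorem stmt_2 (p q : ℕ) (hp : 2 ≤ p) (hq : 2 ≤ q) (w : ℂ) (hw : w ≠ 0)
    (A B : Matrix.SpecialLinearGroup (Fin 2) ℂ)
    (hA : (A : Matrix (Fin 2) (Fin 2) ℂ) =
      !![((Real.cos (π / p) : ℝ) : ℂ), Complex.I * ((Real.sin (π / p) : ℝ) : ℂ);
         Complex.I * ((Real.sin (π / p) : ℝ) : ℂ), ((Real.cos (π / p) : ℝ) : ℂ)])
    (hB : (B : Matrix (Fin 2) (Fin 2) ℂ) =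
      !![((Real.cos (π / q) : ℝ) : ℂ), Complex.I * w * ((Real.sin (π / q) : ℝ) : ℂ);
         Complex.I * w⁻¹ * ((Real.sin (π / q) : ℝ) : ℂ), ((Real.cos (π / q) : ℝ) : ℂ)]) :
    Matrix.trace ((A * B * A⁻¹ * B⁻¹ : Matrix.SpecialLinearGroup (Fin 2) ℂ) :
      Matrix (Fin 2) (Fin 2) ℂ) - 2 =
      ((Real.sin (π / p) ^ 2 : ℝ) : ℂ) * ((Real.sin (π / q) ^ 2 : ℝ) : ℂ) * (w - 1 / w) ^ 2 :=
  stmt_2_general p q w hw A B hA hB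
end

section
/- Let p, q ≥ 2 be integers and let w = r e^{iθ} with r > 0 and θ ∈ ℝ. If |i w cot(π/q) + i cot(π/p)| + |w|/sin(π/q) = 1/sin(π/p), then r² + 1/r² = 4(1 + cos(π/p)cos(π/q)·cos θ)²/(sin(π/p)sin(π/q))² − 2. -/
/-!
Write `w = r e^{iθ}`, `α = π/p` and `β = π/q`. The boundary equation says
`‖i (w cot β + cot α)‖ = 1 / sin α - r / sin β`. Squaring both sides and using
`cot² = 1 / sin² - 1` cancels every term except a quadratic in `r`, namely
`sin α sin β (r² + 1) = 2 r (1 + cos α cos β cos θ)`. Hence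
`r + 1/r = 2 (1 + cos α cos β cos θ) / (sin α sin β)`, and squaring once more gives the claim.
-/

open scoped Real

open Real

lemma Real.sin_pi_div_natCast_pos {n : ℕ} (hn : 2 ≤ n) : 0 < sin (π / n) := by
  have hn1 : (1 : ℝ) < n := by exact_mod_cast hn
  exact sin_pos_of_pos_of_lt_pi (by positivity) (div_lt_self pi_pos hn1)

lemma Complex.sq_norm_I_mul_ofReal_add (w : ℂ) (a b : ℝ) :
    ‖Complex.I * w * (a : ℂ) + Complex.I * (b : ℂ)‖ ^ 2 =
      ‖w‖ ^ 2 * a ^ 2 + 2 * a * b * w.re + b ^ 2 := by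
  rw [mul_assoc, ← mul_add, norm_mul, Complex.norm_I, one_mul, Complex.sq_norm, Complex.sq_norm,
    Complex.normSq_apply, Complex.normSq_apply]
  simp only [Complex.add_re, Complex.add_im, Complex.mul_re, Complex.mul_im, Complex.ofReal_re,
    Complex.ofReal_im]
  ring

lemma add_one_div_eq_of_sq_eq {α β r c : ℝ} (hα : sin α ≠ 0) (hβ : sin β ≠ 0)
    (hr : r ≠ 0)
    (h : (1 / sin α - r / sin β) ^ 2 =
      r ^ 2 * (cos β / sin β) ^ 2 + 2 * (cos β / sin β) * (cos α / sin α) * (r * c)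
        + (cos α / sin α) ^ 2) :
    r + 1 / r = 2 * (1 + cos α * cos β * c) / (sin α * sin β) := by
  field_simp at h ⊢
  refine mul_left_cancel₀ (mul_ne_zero hα hβ) ?_
  linear_combination
    h + sin α ^ 2 * r ^ 2 * sin_sq_add_cos_sq β + sin β ^ 2 * sin_sq_add_cos_sq α

/-- Let p, q ≥ 2 and w = r e^{iθ} with r > 0. If
|i w cot(π/q) + i cot(π/p)| + |w|/sin(π/q) = 1/sin(π/p), then
r² + 1/r² = 4(1 + cos(π/p)cos(π/q)cos θ)²/(sin(π/p)sin(π/q))² − 2. -/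
theorem stmt_3 (p q : ℕ) (hp : 2 ≤ p) (hq : 2 ≤ q) (r θ : ℝ) (hr : 0 < r)
    (w : ℂ) (hw : w = (r : ℂ) * Complex.exp ((θ : ℂ) * Complex.I))
    (heq : ‖Complex.I * w * ((Real.cos (π / q) / Real.sin (π / q) : ℝ) : ℂ)
        + Complex.I * ((Real.cos (π / p) / Real.sin (π / p) : ℝ) : ℂ)‖
        + ‖w‖ / Real.sin (π / q) = 1 / Real.sin (π / p)) :
    r ^ 2 + 1 / r ^ 2 =
      4 * (1 + Real.cos (π / p) * Real.cos (π / q) * Real.cos θ) ^ 2 /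
        (Real.sin (π / p) * Real.sin (π / q)) ^ 2 - 2 := by
  have hnorm : ‖w‖ = r := by
    rw [hw, norm_mul, Complex.norm_exp_ofReal_mul_I, mul_one, Complex.norm_real,
      norm_of_nonneg hr.le]
  have hre : w.re = r * cos θ := by
    rw [hw, Complex.re_ofReal_mul, Complex.exp_ofReal_mul_I_re]
  have hsq := Complex.sq_norm_I_mul_ofReal_add w (cos (π / q) / sin (π / q))
    (cos (π / p) / sin (π / p))
  rw [hnorm] at heq
  rw [hnorm, hre, eq_sub_of_add_eq heq] at hsq
  have hsum := add_one_div_eq_of_sq_eq (sin_pi_div_natCast_pos hp).ne'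
    (sin_pi_div_natCast_pos hq).ne' hr.ne' hsq
  calc r ^ 2 + 1 / r ^ 2 = (r + 1 / r) ^ 2 - 2 := by field_simp; ring
    _ = _ := by rw [hsum]; ring
end

section
/- Let p, q ≥ 2 be integers, c = cos(π/p)cos(π/q), s = sin(π/p)sin(π/q). Then for every t ∈ [0,1], the real part of Ω_{p,q}(t), namely 4(2t²−1)(1+tc)² − 4t²s², is at most 4(cos(π/p) + cos(π/q))². -/
/-!
With `a = cos(π/p)`, `b = cos(π/q)` and `s² = (1 - a²)(1 - b²)`, the gap between the two sides is
`4(1 - t²)(1 + a² + b² + 2t²a²b²) + 8ab(1 - t)(2t² + 2t + 1)`, which is nonnegative for `|t| ≤ 1`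
as soon as `ab ≥ 0`; and `p, q ≥ 2` make both cosines nonnegative.
-/

open scoped Real

/-- The contour point Ω_{p,q}(t). -/
noncomputable def Omega (p q : ℕ) (t : ℝ) : ℂ :=
  ((4 * (2 * t ^ 2 - 1) * (1 + t * (Real.cos (π / p) * Real.cos (π / q))) ^ 2
      - 4 * t ^ 2 * (Real.sin (π / p) * Real.sin (π / q)) ^ 2 : ℝ) : ℂ)
  - ((8 * t * Real.sqrt (1 - t ^ 2) * (1 + t * (Real.cos (π / p) * Real.cos (π / q)))
      * Real.sqrt ((1 + t * (Real.cos (π / p) * Real.cos (π / q))) ^ 2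
        - (Real.sin (π / p) * Real.sin (π / q)) ^ 2) : ℝ) : ℂ) * Complex.I

lemma Omega_re (p q : ℕ) (t : ℝ) :
    (Omega p q t).re
      = 4 * (2 * t ^ 2 - 1) * (1 + t * (Real.cos (π / p) * Real.cos (π / q))) ^ 2
        - 4 * t ^ 2 * ((1 - Real.cos (π / p) ^ 2) * (1 - Real.cos (π / q) ^ 2)) := by
  simp only [Omega, Complex.sub_re, Complex.mul_re, Complex.I_re, Complex.I_im,
    Complex.ofReal_re, Complex.ofReal_im, mul_pow, Real.sin_sq]
  ring

lemma Real.cos_pi_div_natCast_nonneg {n : ℕ} (hn : 2 ≤ n) : 0 ≤ Real.cos (π / n) := by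
  have hn' : (2 : ℝ) ≤ n := by exact_mod_cast hn
  apply Real.cos_nonneg_of_mem_Icc
  constructor
  · linarith [div_nonneg Real.pi_pos.le (by linarith : (0 : ℝ) ≤ n), Real.pi_pos]
  · exact div_le_div_of_nonneg_left Real.pi_pos.le two_pos hn'

lemma re_contour_le_sq_add {a b t : ℝ} (hab : 0 ≤ a * b) (ht₀ : -1 ≤ t) (ht₁ : t ≤ 1) :
    4 * (2 * t ^ 2 - 1) * (1 + t * (a * b)) ^ 2 - 4 * t ^ 2 * ((1 - a ^ 2) * (1 - b ^ 2))
      ≤ 4 * (a + b) ^ 2 := by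
  have hgap : 4 * (a + b) ^ 2
      - (4 * (2 * t ^ 2 - 1) * (1 + t * (a * b)) ^ 2 - 4 * t ^ 2 * ((1 - a ^ 2) * (1 - b ^ 2)))
      = 4 * ((1 - t) * (1 + t)) * (1 + a ^ 2 + b ^ 2 + 2 * t ^ 2 * (a * b) ^ 2)
        + 8 * (a * b) * ((1 - t) * (2 * t ^ 2 + 2 * t + 1)) := by
    ring
  have hquad : 0 < 2 * t ^ 2 + 2 * t + 1 := by nlinarith [sq_nonneg (2 * t + 1)]
  have hnonneg : 0 ≤ 4 * ((1 - t) * (1 + t)) * (1 + a ^ 2 + b ^ 2 + 2 * t ^ 2 * (a * b) ^ 2)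
      + 8 * (a * b) * ((1 - t) * (2 * t ^ 2 + 2 * t + 1)) := by
    have h1t : 0 ≤ 1 - t := by linarith
    have h1t' : 0 ≤ 1 + t := by linarith
    positivity
  linarith

/-- For p, q ≥ 2 and t ∈ [0,1], the real part of Ω_{p,q}(t), namely
4(2t²−1)(1+tc)² − 4t²s², is at most 4(cos(π/p) + cos(π/q))². -/
theorem stmt_4 (p q : ℕ) (hp : 2 ≤ p) (hq : 2 ≤ q)
    (t : ℝ) (ht : t ∈ Set.Icc (0 : ℝ) 1) :
    (Omega p q t).re ≤ 4 * (Real.cos (π / p) + Real.cos (π / q)) ^ 2 := by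
  rw [Omega_re]
  exact re_contour_le_sq_add
    (mul_nonneg (Real.cos_pi_div_natCast_nonneg hp) (Real.cos_pi_div_natCast_nonneg hq))
    (by linarith [ht.1]) ht.2
end

section
/- Let p, q ≥ 2 be integers, c = cos(π/p)cos(π/q), s = sin(π/p)sin(π/q). Then for every t ∈ [0,1], |Ω_{p,q}(t)| = 4((1+tc)² − t²s²); moreover, if c ≥ s (which holds in particular when p, q ≥ 6), then |Ω_{p,q}(t)| ≤ 4(cos(π/p) + cos(π/q))². -/
/-!
Writing `A = 1 + t c`, the contour point is a perfect square,
`Ω_{p,q}(t) = 4 (t √(A² - s²) - i √(1 - t²) A)²`,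
so its modulus is `4 (t² (A² - s²) + (1 - t²) A²) = 4 (A² - t² s²)`.
Up to the factor 4 this is `1 + 2 t c + t² (c² - s²)`, increasing in `t` when `0 ≤ s ≤ c`;
its value `(1 + c)² - s²` at `t = 1` equals `(cos(π/p) + cos(π/q))²`.
-/

open scoped Real

open Real

section ContourPoint

variable {A s t : ℝ}

lemma contour_point_eq_four_mul_sq (ht : t ^ 2 ≤ 1) (hs : s ^ 2 ≤ A ^ 2) :
    (((4 * (2 * t ^ 2 - 1) * A ^ 2 - 4 * t ^ 2 * s ^ 2 : ℝ) : ℂ)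
      - ((8 * t * √(1 - t ^ 2) * A * √(A ^ 2 - s ^ 2) : ℝ) : ℂ) * Complex.I)
      = 4 * (((t * √(A ^ 2 - s ^ 2) : ℝ) : ℂ)
        + ((-(√(1 - t ^ 2) * A) : ℝ) : ℂ) * Complex.I) ^ 2 := by
  have hu : ((√(1 - t ^ 2) : ℝ) : ℂ) ^ 2 = 1 - t ^ 2 := by
    exact_mod_cast Real.sq_sqrt (sub_nonneg.mpr ht)
  have hv : ((√(A ^ 2 - s ^ 2) : ℝ) : ℂ) ^ 2 = A ^ 2 - s ^ 2 := by
    exact_mod_cast Real.sq_sqrt (sub_nonneg.mpr hs)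
  push_cast
  linear_combination (-4 * (t : ℂ) ^ 2) * hv + 4 * (A : ℂ) ^ 2 * hu
    - 4 * ((√(1 - t ^ 2) : ℝ) : ℂ) ^ 2 * (A : ℂ) ^ 2 * Complex.I_sq

lemma norm_contour_point (ht : t ^ 2 ≤ 1) (hs : s ^ 2 ≤ A ^ 2) :
    ‖(((4 * (2 * t ^ 2 - 1) * A ^ 2 - 4 * t ^ 2 * s ^ 2 : ℝ) : ℂ)
      - ((8 * t * √(1 - t ^ 2) * A * √(A ^ 2 - s ^ 2) : ℝ) : ℂ) * Complex.I)‖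
      = 4 * (A ^ 2 - t ^ 2 * s ^ 2) := by
  rw [contour_point_eq_four_mul_sq ht hs, norm_mul, norm_pow, Complex.norm_add_mul_I,
    Real.sq_sqrt (by positivity), mul_pow, neg_sq, mul_pow, Real.sq_sqrt (sub_nonneg.mpr hs),
    Real.sq_sqrt (sub_nonneg.mpr ht)]
  norm_num
  ring

end ContourPoint

lemma modulus_le_modulus_at_one {c s t : ℝ} (hc : 0 ≤ c) (hsc : s ^ 2 ≤ c ^ 2)
    (ht0 : 0 ≤ t) (ht1 : t ≤ 1) :
    (1 + t * c) ^ 2 - t ^ 2 * s ^ 2 ≤ (1 + c) ^ 2 - s ^ 2 := by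
  have hlin : 0 ≤ c * (1 - t) := mul_nonneg hc (by linarith)
  have hquad : 0 ≤ (c ^ 2 - s ^ 2) * (1 - t ^ 2) :=
    mul_nonneg (by linarith) (by nlinarith)
  nlinarith

lemma one_add_cos_mul_cos_sq_sub_sin_mul_sin_sq (a b : ℝ) :
    (1 + cos a * cos b) ^ 2 - (sin a * sin b) ^ 2 = (cos a + cos b) ^ 2 := by
  linear_combination (cos b ^ 2 - 1) * sin_sq_add_cos_sq a - sin a ^ 2 * sin_sq_add_cos_sq b

lemma cos_pi_div_nonneg {n : ℕ} (hn : 2 ≤ n) : 0 ≤ cos (π / n) := by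
  have hn' : (2 : ℝ) ≤ n := by exact_mod_cast hn
  have hpos : 0 ≤ π / n := by positivity
  exact cos_nonneg_of_mem_Icc
    ⟨by linarith [pi_pos], div_le_div_of_nonneg_left pi_pos.le two_pos hn'⟩

lemma sin_pi_div_nonneg (n : ℕ) : 0 ≤ sin (π / n) := by
  rcases n.eq_zero_or_pos with rfl | hn
  · simp
  exact sin_nonneg_of_nonneg_of_le_pi (by positivity)
    (div_le_self pi_pos.le (by exact_mod_cast hn))

/-- For p, q ≥ 2, c = cos(π/p)cos(π/q), s = sin(π/p)sin(π/q) and t ∈ [0,1],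
|Ω_{p,q}(t)| = 4((1+tc)² − t²s²); moreover if c ≥ s (as holds when p, q ≥ 6), then
|Ω_{p,q}(t)| ≤ 4(cos(π/p) + cos(π/q))². -/
theorem stmt_5 (p q : ℕ) (hp : 2 ≤ p) (hq : 2 ≤ q)
    (t : ℝ) (ht : t ∈ Set.Icc (0 : ℝ) 1) :
    ‖Omega p q t‖ =
      4 * ((1 + t * (Real.cos (π / p) * Real.cos (π / q))) ^ 2
        - t ^ 2 * (Real.sin (π / p) * Real.sin (π / q)) ^ 2) ∧
    (Real.sin (π / p) * Real.sin (π / q) ≤ Real.cos (π / p) * Real.cos (π / q) →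
      ‖Omega p q t‖ ≤ 4 * (Real.cos (π / p) + Real.cos (π / q)) ^ 2) := by
  obtain ⟨ht0, ht1⟩ := ht
  set c := cos (π / p) * cos (π / q)
  set s := sin (π / p) * sin (π / q)
  have hc : 0 ≤ c := mul_nonneg (cos_pi_div_nonneg hp) (cos_pi_div_nonneg hq)
  have hs : 0 ≤ s := mul_nonneg (sin_pi_div_nonneg p) (sin_pi_div_nonneg q)
  have hs1 : s ≤ 1 + t * c := by
    nlinarith [mul_le_one₀ (sin_le_one (π / p)) (sin_pi_div_nonneg q) (sin_le_one (π / q))]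
  have hnorm : ‖Omega p q t‖ = 4 * ((1 + t * c) ^ 2 - t ^ 2 * s ^ 2) :=
    norm_contour_point (by nlinarith) (pow_le_pow_left₀ hs hs1 2)
  refine ⟨hnorm, fun hsc => ?_⟩
  calc ‖Omega p q t‖
      = 4 * ((1 + t * c) ^ 2 - t ^ 2 * s ^ 2) := hnorm
    _ ≤ 4 * ((1 + c) ^ 2 - s ^ 2) := mul_le_mul_of_nonneg_left
        (modulus_le_modulus_at_one hc (pow_le_pow_left₀ hs hsc 2) ht0 ht1) four_pos.le
    _ = 4 * (cos (π / p) + cos (π / q)) ^ 2 := by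
        rw [one_add_cos_mul_cos_sq_sub_sin_mul_sin_sq]
end

section
/- Let p, q ≥ 6 be integers and L = ℚ(cos(2π/p), cos(2π/q)) ⊆ ℝ, with μ = [L : ℚ]. Let γ ∈ ℂ∖ℝ be an algebraic integer such that the field K = ℚ(γ) ⊆ ℂ contains L, with [K : L] = r; assume every field embedding K → ℂ other than the inclusion K ⊆ ℂ and its complex conjugate has image contained in ℝ; assume |γ| ≤ 4(cos(π/p) + cos(π/q))²; and assume every field embedding τ : K → ℝ satisfies −τ(β₁β₂)/4 < τ(γ) < 0, where β₁β₂ = 16 sin²(π/p) sin²(π/q) is viewed as an element of L ⊆ K. Then r·μ ≤ 4·log[(cos(π/p) + cos(π/q))/(sin(π/p) sin(π/q))] / log(4/δ_{p,q}), where δ_{p,q} = δ_p^{2/φ(p)} · δ_q^{2/φ(q)}. -/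
open scoped Real Classical

/-- δ_n = m if n is a power of a prime m, and δ_n = 1 otherwise. -/
noncomputable def deltaFn (n : ℕ) : ℕ := if IsPrimePow n then n.minFac else 1

/-!
Let `ι : K → ℂ` be the inclusion. Since `ι` and `conj ∘ ι` are the only non-real embeddings,
`|N(γ)| = |γ|² ∏_τ |τ γ| ≤ |γ|² ∏_τ τ(b)/4` over the `n - 2` real embeddings `τ`, while
`N(b) = |b|² ∏_τ τ(b)`. As `γ` is a non-zero algebraic integer, `|N(γ)| ≥ 1`, so
`4ⁿ |b|² ≤ 16 |γ|² N(b)`.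

The norm of `b = 16 sin²(π/p) sin²(π/q)` is computed in the compositum of `K` with the cyclotomic
fields `ℚ(ζ_p)`, `ℚ(ζ_q)`: there `4 sin²(π/m) = (ζ_m - 1)(ζ_m⁻¹ - 1)` has norm `δ_m²`, so the
normalized norm `|N(b)|^{1/n}`, which does not depend on the field containing `b`, equals
`δ_p^{2/φ(p)} δ_q^{2/φ(q)}`. Feeding this and `|γ| ≤ 4 (cos(π/p) + cos(π/q))²` into the
inequality above and taking logarithms gives the bound on `n = rμ`.
-/

open Polynomial Module IntermediateField NumberField NumberField.InfinitePlace
  NumberField.ComplexEmbedding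

/-- Mathlib's `IsPrimitiveRoot.intermediateField_adjoin_isCyclotomicExtension` assumes
`Algebra.IsIntegral F E`, which fails for `ℚ ⊆ ℂ`. -/
theorem IsPrimitiveRoot.intermediateField_adjoin_isCyclotomicExtension_of_isAlgebraic
    {F E : Type*} [Field F] [Field E] [Algebra F E] {n : ℕ} [NeZero n] {ζ : E}
    (hζ : IsPrimitiveRoot ζ n) (halg : IsAlgebraic F ζ) :
    IsCyclotomicExtension {n} F F⟮ζ⟯ := by
  change IsCyclotomicExtension {n} F F⟮ζ⟯.toSubalgebra
  rw [adjoin_simple_toSubalgebra_of_isAlgebraic halg]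
  exact hζ.adjoin_isCyclotomicExtension F

theorem deltaFn_pos (n : ℕ) : 0 < deltaFn n := by
  unfold deltaFn
  split_ifs
  exacts [Nat.minFac_pos n, one_pos]

theorem eval_one_cyclotomic_eq_deltaFn {n : ℕ} (hn : 2 ≤ n) :
    eval 1 (cyclotomic n ℤ) = deltaFn n := by
  unfold deltaFn
  split_ifs with h
  · obtain ⟨m, k, hm, hk, rfl⟩ := h
    have := Fact.mk (Nat.prime_iff.mpr hm)
    obtain ⟨k, rfl⟩ := Nat.exists_eq_succ_of_ne_zero hk.ne'
    rw [eval_one_cyclotomic_prime_pow, Nat.Prime.pow_minFac this.out k.succ_ne_zero]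
  · rw [eval_one_cyclotomic_not_prime_pow, Nat.cast_one]
    rintro m hm (_ | k) hmk
    · rw [pow_zero] at hmk; omega
    · exact h ⟨m, k + 1, hm.prime, k.succ_pos, hmk⟩

theorem IsPrimitiveRoot.norm_sub_one_eq_deltaFn {L : Type*} [Field L] [Algebra ℚ L] {n : ℕ}
    [IsCyclotomicExtension {n} ℚ L] {ζ : L} (hζ : IsPrimitiveRoot ζ n) (hn : 2 < n) :
    Algebra.norm ℚ (ζ - 1) = deltaFn n := by
  have : NeZero n := ⟨by omega⟩
  rw [hζ.sub_one_norm_eq_eval_cyclotomic hn (cyclotomic.irreducible_rat (by omega)),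
    eval_one_cyclotomic_eq_deltaFn hn.le, Int.cast_natCast]

theorem Complex.exp_mul_I_sub_one_mul_exp_neg_mul_I_sub_one (z : ℂ) :
    (exp (z * I) - 1) * (exp (-z * I) - 1) = 4 * sin (z / 2) ^ 2 := by
  have hprod : exp (z * I) * exp (-z * I) = 1 := by rw [← exp_add]; simp
  have hhalf : cos z = 1 - 2 * sin (z / 2) ^ 2 := by
    rw [← mul_div_cancel₀ z two_ne_zero, cos_two_mul', mul_div_cancel_left₀ _ two_ne_zero]
    linear_combination cos_sq_add_sin_sq (z / 2)
  linear_combination hprod + two_cos z - 2 * hhalf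

section normalizedNorm

variable {E : Type*} [Field E] [Algebra ℚ E] {F M : IntermediateField ℚ E}

/-- Stated over `ℚ` rather than a general base field: there the `ℚ`-algebra structure of `F` would be
`F.algebra'`, whereas elsewhere it elaborates to `DivisionRing.toRatAlgebra`. -/
theorem IntermediateField.norm_inclusion (h : F ≤ M) (x : F) :
    Algebra.norm ℚ (inclusion h x) = Algebra.norm ℚ x ^ finrank F (extendScalars h) := by
  rw [← map_pow, ← Algebra.norm_algebraMap (S := extendScalars h), Algebra.norm_norm]
  rfl

/-- The geometric mean of the absolute values of the conjugates of `x`. -/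
noncomputable def normalizedNorm (x : F) : ℝ :=
  |(Algebra.norm ℚ x : ℝ)| ^ (finrank ℚ F : ℝ)⁻¹

theorem normalizedNorm_mul (x y : F) :
    normalizedNorm (x * y) = normalizedNorm x * normalizedNorm y := by
  simp only [normalizedNorm, map_mul, Rat.cast_mul, abs_mul,
    Real.mul_rpow (abs_nonneg _) (abs_nonneg _)]

theorem abs_norm_eq_normalizedNorm_pow [FiniteDimensional ℚ F] (x : F) :
    |(Algebra.norm ℚ x : ℝ)| = normalizedNorm x ^ finrank ℚ F :=
  (Real.rpow_inv_natCast_pow (abs_nonneg _) finrank_pos.ne').symm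

theorem normalizedNorm_inclusion (h : F ≤ M) [FiniteDimensional ℚ M] (x : F) :
    normalizedNorm (inclusion h x) = normalizedNorm x := by
  have : FiniteDimensional ℚ (extendScalars h) := ‹FiniteDimensional ℚ M›
  have : FiniteDimensional F (extendScalars h) := FiniteDimensional.right ℚ F (extendScalars h)
  have htower : finrank ℚ F * finrank F (extendScalars h) = finrank ℚ M :=
    finrank_mul_finrank ℚ F (extendScalars h)
  rw [normalizedNorm, normalizedNorm, norm_inclusion, Rat.cast_pow, abs_pow, ← htower,
    ← Real.rpow_natCast, ← Real.rpow_mul (abs_nonneg _), Nat.cast_mul, mul_inv_rev,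
    mul_inv_cancel_left₀ (Nat.cast_ne_zero.mpr finrank_pos.ne')]

end normalizedNorm

theorem exists_normalizedNorm_eq_deltaFn_rpow {n : ℕ} (hn : 2 < n) :
    ∃ (F : IntermediateField ℚ ℂ) (x : F), FiniteDimensional ℚ F ∧
      (x : ℂ) = ((4 * Real.sin (π / n) ^ 2 : ℝ) : ℂ) ∧
      normalizedNorm x = (deltaFn n : ℝ) ^ ((2 : ℝ) / n.totient) := by
  have : NeZero n := ⟨by omega⟩
  set ζ := Complex.exp (2 * π * Complex.I / n)
  have hζ : IsPrimitiveRoot ζ n := Complex.isPrimitiveRoot_exp n (NeZero.ne n)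
  have : IsCyclotomicExtension {n} ℚ ℚ⟮ζ⟯ :=
    hζ.intermediateField_adjoin_isCyclotomicExtension_of_isAlgebraic
      (IsIntegral.tower_top (A := ℚ) (hζ.isIntegral (NeZero.pos n))).isAlgebraic
  have := IsCyclotomicExtension.finiteDimensional {n} ℚ ℚ⟮ζ⟯
  have hg : IsPrimitiveRoot (AdjoinSimple.gen ℚ ζ) n :=
    IsPrimitiveRoot.coe_submonoidClass_iff.mp hζ
  refine ⟨ℚ⟮ζ⟯, (AdjoinSimple.gen ℚ ζ - 1) * ((AdjoinSimple.gen ℚ ζ)⁻¹ - 1), inferInstance,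
    ?_, ?_⟩
  · have hζ' : ζ = Complex.exp (((2 * π / n : ℝ) : ℂ) * Complex.I) := by
      simp only [ζ]; push_cast; ring_nf
    push_cast
    rw [AdjoinSimple.coe_gen, hζ', ← Complex.exp_neg, ← neg_mul,
      Complex.exp_mul_I_sub_one_mul_exp_neg_mul_I_sub_one]
    push_cast; ring_nf
  · rw [normalizedNorm, map_mul, hg.norm_sub_one_eq_deltaFn hn, hg.inv.norm_sub_one_eq_deltaFn hn,
      IsCyclotomicExtension.finrank ℚ⟮ζ⟯ (cyclotomic.irreducible_rat (NeZero.pos n))]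
    push_cast
    rw [abs_of_nonneg (by positivity), ← sq, ← Real.rpow_natCast, ← Real.rpow_mul (by positivity)]
    norm_num [div_eq_mul_inv]

theorem normalizedNorm_sin_sq_mul_sin_sq {K : IntermediateField ℚ ℂ} [FiniteDimensional ℚ K]
    {p q : ℕ} (hp : 2 < p) (hq : 2 < q) {b : K}
    (hb : (b : ℂ) = ((16 * Real.sin (π / p) ^ 2 * Real.sin (π / q) ^ 2 : ℝ) : ℂ)) :
    normalizedNorm b =
      (deltaFn p : ℝ) ^ ((2 : ℝ) / p.totient) * (deltaFn q : ℝ) ^ ((2 : ℝ) / q.totient) := by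
  obtain ⟨Fp, xp, _, hxp, hNp⟩ := exists_normalizedNorm_eq_deltaFn_rpow hp
  obtain ⟨Fq, xq, _, hxq, hNq⟩ := exists_normalizedNorm_eq_deltaFn_rpow hq
  have hKM : K ≤ K ⊔ Fp ⊔ Fq := le_sup_left.trans le_sup_left
  have hpM : Fp ≤ K ⊔ Fp ⊔ Fq := le_sup_right.trans le_sup_left
  have hqM : Fq ≤ K ⊔ Fp ⊔ Fq := le_sup_right
  have hbM : inclusion hKM b = inclusion hpM xp * inclusion hqM xq := by
    apply Subtype.ext
    push_cast [coe_inclusion, hb, hxp, hxq]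
    ring
  rw [← normalizedNorm_inclusion hKM, hbM, normalizedNorm_mul, normalizedNorm_inclusion,
    normalizedNorm_inclusion, hNp, hNq]

theorem sq_lt_two_pow_pred {m : ℕ} (hm : 7 ≤ m) : m ^ 2 < 2 ^ (m - 1) := by
  induction m, hm using Nat.le_induction with
  | base => norm_num
  | succ m hm ih =>
    calc (m + 1) ^ 2 ≤ 2 * m ^ 2 := by nlinarith
      _ < 2 * 2 ^ (m - 1) := by omega
      _ = 2 ^ (m + 1 - 1) := by rw [Nat.add_sub_cancel, ← pow_succ', Nat.sub_add_cancel (by omega)]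

/-- For `n = m ^ (k + 2)`, `φ(n) ≥ 2m` and `m² < 4 ^ m`; for a prime `n = m ≥ 7`,
`m² < 2 ^ (m - 1)`. -/
theorem deltaFn_sq_lt_two_pow_totient {n : ℕ} (hn : 6 ≤ n) : deltaFn n ^ 2 < 2 ^ n.totient := by
  unfold deltaFn
  split_ifs with h
  · obtain ⟨m, k, hm, hk, rfl⟩ := h
    replace hm := Nat.prime_iff.mpr hm
    obtain ⟨k, rfl⟩ := Nat.exists_eq_succ_of_ne_zero hk.ne'
    rw [hm.pow_minFac k.succ_ne_zero, Nat.totient_prime_pow_succ hm]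
    rcases k with _ | k
    · have : m ≠ 6 := by rintro rfl; norm_num at hm
      simpa using sq_lt_two_pow_pred (m := m) (by simp at hn; omega)
    have h2m : 2 * m ≤ m ^ (k + 1) * (m - 1) := by
      by_cases hm2 : m = 2
      · subst hm2
        have : 2 ≤ k + 1 := by
          by_contra hk
          obtain rfl : k = 0 := by omega
          norm_num at hn
        calc 2 * 2 = 2 ^ 2 := by norm_num
          _ ≤ 2 ^ (k + 1) * (2 - 1) := by simpa using Nat.pow_le_pow_right two_pos this
      · have : 3 ≤ m := lt_of_le_of_ne hm.two_le (Ne.symm hm2)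
        calc 2 * m ≤ m * (m - 1) := by rw [mul_comm]; exact Nat.mul_le_mul_left m (by omega)
          _ ≤ m ^ (k + 1) * (m - 1) :=
            Nat.mul_le_mul_right _ (Nat.le_self_pow k.succ_ne_zero m)
    calc m ^ 2 < (2 ^ m) ^ 2 := Nat.pow_lt_pow_left m.lt_two_pow_self two_ne_zero
      _ = 2 ^ (2 * m) := by rw [← pow_mul, mul_comm]
      _ ≤ 2 ^ (m ^ (k + 1) * (m - 1)) := Nat.pow_le_pow_right two_pos h2m
  · simpa using Nat.one_lt_two_pow (Nat.totient_pos.mpr (by omega)).ne'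

theorem deltaFn_rpow_lt_two {n : ℕ} (hn : 6 ≤ n) :
    (deltaFn n : ℝ) ^ ((2 : ℝ) / n.totient) < 2 := by
  have hφ : (0 : ℝ) < n.totient := by exact_mod_cast Nat.totient_pos.mpr (by omega)
  rw [div_eq_mul_inv, Real.rpow_mul (Nat.cast_nonneg _),
    Real.rpow_inv_lt_iff_of_pos (by positivity) zero_le_two hφ, Real.rpow_two,
    Real.rpow_natCast]
  exact_mod_cast deltaFn_sq_lt_two_pow_totient hn

theorem deltaFn_rpow_mul_deltaFn_rpow_mem_Ioo {p q : ℕ} (hp : 6 ≤ p) (hq : 6 ≤ q) :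
    (deltaFn p : ℝ) ^ ((2 : ℝ) / p.totient) * (deltaFn q : ℝ) ^ ((2 : ℝ) / q.totient) ∈
      Set.Ioo 0 4 := by
  have hpos (n : ℕ) : 0 < (deltaFn n : ℝ) ^ ((2 : ℝ) / n.totient) :=
    Real.rpow_pos_of_pos (by exact_mod_cast deltaFn_pos n) _
  refine ⟨mul_pos (hpos p) (hpos q), ?_⟩
  linarith [mul_lt_mul'' (deltaFn_rpow_lt_two hp) (deltaFn_rpow_lt_two hq) (hpos p).le (hpos q).le]

theorem NumberField.ComplexEmbedding.isReal_of_forall_im_eq_zero {K : Type*} [Field K]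
    {φ : K →+* ℂ} (h : ∀ x, (φ x).im = 0) : ComplexEmbedding.IsReal φ :=
  isReal_iff.mpr (RingHom.ext fun x => Complex.conj_eq_iff_im.mpr (h x))

theorem NumberField.one_le_abs_norm_of_isIntegral {K : Type*} [Field K] [NumberField K] {x : K}
    (hx : IsIntegral ℤ x) (hx0 : x ≠ 0) : 1 ≤ |(Algebra.norm ℚ x : ℝ)| := by
  obtain ⟨m, hm⟩ := IsIntegrallyClosed.isIntegral_iff.mp (Algebra.isIntegral_norm ℚ hx)
  have hm0 : m ≠ 0 := by
    rintro rfl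
    exact hx0 (by simpa using hm.symm)
  rw [← hm, eq_intCast, Rat.cast_intCast, ← Int.cast_abs]
  exact_mod_cast Int.one_le_abs hm0

namespace NumberField.InfinitePlace

variable {K : Type*} [Field K] {ι : K →+* ℂ}
  (hreal : ∀ φ : K →+* ℂ, φ ≠ ι → φ ≠ conjugate ι → ComplexEmbedding.IsReal φ)
include hreal

theorem eq_mk_of_isComplex {w : InfinitePlace K} (hw : IsComplex w) : w = mk ι := by
  rw [← mk_embedding w]
  by_cases h : w.embedding = ι
  · rw [h]
  by_cases h' : w.embedding = conjugate ι
  · rw [h', mk_conjugate_eq]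
  exact absurd (hreal _ h h') (isComplex_iff.mp hw)

variable [NumberField K] (hι : ¬ComplexEmbedding.IsReal ι)
include hι

theorem abs_norm_eq_norm_sq_mul_prod (x : K) :
    |(Algebra.norm ℚ x : ℝ)| = ‖ι x‖ ^ 2 * ∏ w : {w : InfinitePlace K // IsReal w}, w.1 x := by
  have : Subsingleton {w : InfinitePlace K // IsComplex w} := ⟨fun w w' => Subtype.ext <|
    (eq_mk_of_isComplex hreal w.2).trans (eq_mk_of_isComplex hreal w'.2).symm⟩
  have hw : IsComplex (mk ι) := isComplex_mk_iff.mpr hι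
  rw [← Rat.cast_abs, ← prod_eq_abs_norm, prod_eq_prod_mul_prod,
    Fintype.prod_subsingleton (fun w : {w // IsComplex w} => w.1 x ^ mult w.1) ⟨mk ι, hw⟩,
    hw.mult_eq_two, apply, mul_comm]
  simp

theorem nrRealPlaces_add_two : nrRealPlaces K + 2 = finrank ℚ K := by
  have : nrComplexPlaces K = 1 := Fintype.card_eq_one_iff.mpr
    ⟨⟨mk ι, isComplex_mk_iff.mpr hι⟩, fun w => Subtype.ext (eq_mk_of_isComplex hreal w.2)⟩
  rw [← card_add_two_mul_card_eq_rank, this, mul_one]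

theorem four_pow_finrank_mul_norm_sq_le {γ b : K} (hγ : IsIntegral ℤ γ) (hγ0 : γ ≠ 0)
    (hτ : ∀ τ : K →+* ℝ, |τ γ| ≤ τ b / 4) :
    4 ^ finrank ℚ K * ‖ι b‖ ^ 2 ≤ 16 * ‖ι γ‖ ^ 2 * |(Algebra.norm ℚ b : ℝ)| := by
  have hplace (w : {w : InfinitePlace K // IsReal w}) : 4 * w.1 γ ≤ w.1 b := by
    have hτw := hτ (embedding_of_isReal w.2)
    rw [← norm_embedding_of_isReal w.2, ← norm_embedding_of_isReal w.2, Real.norm_eq_abs,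
      Real.norm_eq_abs, abs_of_nonneg (a := embedding_of_isReal w.2 b)
        (by linarith [abs_nonneg (embedding_of_isReal w.2 γ)])]
    linarith
  have hprod : 4 ^ nrRealPlaces K * ∏ w : {w // IsReal w}, w.1 γ ≤
      ∏ w : {w // IsReal w}, w.1 b := by
    rw [nrRealPlaces, ← Finset.card_univ, ← Finset.prod_const, ← Finset.prod_mul_distrib]
    exact Finset.prod_le_prod (fun w _ => by positivity) (fun w _ => hplace w)
  calc 4 ^ finrank ℚ K * ‖ι b‖ ^ 2
      = 16 * ‖ι b‖ ^ 2 * 4 ^ nrRealPlaces K * 1 := by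
        rw [← nrRealPlaces_add_two hreal hι]; ring
    _ ≤ 16 * ‖ι b‖ ^ 2 * 4 ^ nrRealPlaces K * |(Algebra.norm ℚ γ : ℝ)| := by
        gcongr; exact one_le_abs_norm_of_isIntegral hγ hγ0
    _ = 16 * ‖ι γ‖ ^ 2 * ‖ι b‖ ^ 2 * (4 ^ nrRealPlaces K * ∏ w : {w // IsReal w}, w.1 γ) := by
        rw [abs_norm_eq_norm_sq_mul_prod hreal hι]; ring
    _ ≤ 16 * ‖ι γ‖ ^ 2 * |(Algebra.norm ℚ b : ℝ)| := by
        rw [abs_norm_eq_norm_sq_mul_prod hreal hι, mul_assoc]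
        gcongr

end NumberField.InfinitePlace

theorem natCast_le_four_mul_log_div_log {n : ℕ} {c s Δ : ℝ} (hs : s ≠ 0) (hΔ : 0 < Δ)
    (hΔ4 : Δ < 4) (h : 4 ^ n * s ^ 4 ≤ c ^ 4 * Δ ^ n) :
    (n : ℝ) ≤ 4 * Real.log (c / s) / Real.log (4 / Δ) := by
  have h' : (4 / Δ) ^ n ≤ (c / s) ^ 4 := by
    rw [div_pow, div_pow, div_le_div_iff₀ (by positivity) (by positivity)]
    linarith
  have hlog : 4 * Real.log (c / s) = Real.log ((c / s) ^ 4) := by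
    rw [Real.log_pow]; norm_num
  rw [le_div_iff₀ (Real.log_pos ((one_lt_div hΔ).mpr hΔ4)), hlog]
  exact (Real.pow_le_iff_le_log (by positivity) (lt_of_lt_of_le (by positivity) h')).mp h'

theorem stmt_9_general (p q : ℕ) (hp : 6 ≤ p) (hq : 6 ≤ q) (r : ℕ)
    (γ : ℂ) (hγnotreal : γ.im ≠ 0) (hγint : IsIntegral ℤ γ)
    (L K : IntermediateField ℚ ℂ)
    (hK : K = IntermediateField.adjoin ℚ {γ})
    (hγK : γ ∈ K)
    (hLK : L ≤ K)
    (μ : ℕ) (hμ : Module.finrank ℚ ↥L = μ)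
    (hr : Module.finrank ↥L ↥(IntermediateField.extendScalars hLK) = r)
    (hembs : ∀ φ : ↥K →+* ℂ, φ ≠ algebraMap ↥K ℂ →
      φ ≠ (starRingEnd ℂ).comp (algebraMap ↥K ℂ) → ∀ x : ↥K, (φ x).im = 0)
    (hbound : ‖γ‖ ≤ 4 * (Real.cos (π / p) + Real.cos (π / q)) ^ 2)
    (b : ↥K) (hb : (b : ℂ) = ((16 * Real.sin (π / p) ^ 2 * Real.sin (π / q) ^ 2 : ℝ) : ℂ))
    (hτ : ∀ τ : ↥K →+* ℝ, -(τ b) / 4 < τ ⟨γ, hγK⟩ ∧ τ ⟨γ, hγK⟩ < 0) :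
    (r * μ : ℝ) ≤ 4 * Real.log ((Real.cos (π / p) + Real.cos (π / q)) /
        (Real.sin (π / p) * Real.sin (π / q))) /
      Real.log (4 / ((deltaFn p : ℝ) ^ ((2 : ℝ) / (Nat.totient p : ℝ)) *
        (deltaFn q : ℝ) ^ ((2 : ℝ) / (Nat.totient q : ℝ)))) := by
  have : FiniteDimensional ℚ K := hK ▸ adjoin.finiteDimensional hγint.tower_top
  have : NumberField K := ⟨⟩
  set γK : K := ⟨γ, hγK⟩
  have hγ : algebraMap K ℂ γK = γ := rfl
  have hι : ¬ComplexEmbedding.IsReal (algebraMap K ℂ) := fun h =>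
    hγnotreal (Complex.conj_eq_iff_im.mp (RingHom.congr_fun h γK))
  have hkey := four_pow_finrank_mul_norm_sq_le (b := b)
    (fun φ h₁ h₂ => isReal_of_forall_im_eq_zero (hembs φ h₁ h₂)) hι
    ((isIntegral_algebraMap_iff (x := γK) (algebraMap K ℂ).injective).mp hγint)
    (fun h => hγnotreal (by simp [← hγ, h]))
    (fun τ => by rw [abs_of_neg (hτ τ).2]; linarith [(hτ τ).1])
  have hsin {m : ℕ} (hm : 6 ≤ m) : 0 < Real.sin (π / m) :=
    Real.sin_pos_of_pos_of_lt_pi (by positivity) (div_lt_self Real.pi_pos (by norm_cast; omega))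
  have hbnorm : ‖algebraMap K ℂ b‖ = 16 * (Real.sin (π / p) * Real.sin (π / q)) ^ 2 := by
    rw [IntermediateField.algebraMap_apply, hb, Complex.norm_real,
      Real.norm_of_nonneg (by positivity)]
    ring
  rw [abs_norm_eq_normalizedNorm_pow, normalizedNorm_sin_sq_mul_sin_sq (by omega) (by omega) hb,
    hγ, hbnorm] at hkey
  have hrμ : (r * μ : ℝ) = finrank ℚ K := by
    rw [← hr, ← hμ, mul_comm]
    exact_mod_cast finrank_mul_finrank ℚ L (extendScalars hLK)
  obtain ⟨hΔ, hΔ4⟩ := deltaFn_rpow_mul_deltaFn_rpow_mem_Ioo hp hq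
  rw [hrμ]
  refine natCast_le_four_mul_log_div_log (mul_pos (hsin hp) (hsin hq)).ne' hΔ hΔ4 ?_
  have hγΔ := mul_le_mul_of_nonneg_right (pow_le_pow_left₀ (norm_nonneg γ) hbound 2)
    (pow_nonneg hΔ.le (finrank ℚ K))
  linear_combination (hkey + 16 * hγΔ) / 256

/-- degree bound r·μ ≤ 4·log[(cos(π/p)+cos(π/q))/(sin(π/p)sin(π/q))]/log(4/δ_{p,q}). -/
theorem stmt_9 (p q : ℕ) (hp : 6 ≤ p) (hq : 6 ≤ q) (r : ℕ)
    (γ : ℂ) (hγnotreal : γ.im ≠ 0) (hγint : IsIntegral ℤ γ)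
    (L K : IntermediateField ℚ ℂ)
    (hL : L = IntermediateField.adjoin ℚ
      {((Real.cos (2 * π / p) : ℝ) : ℂ), ((Real.cos (2 * π / q) : ℝ) : ℂ)})
    (hK : K = IntermediateField.adjoin ℚ {γ})
    (hγK : γ ∈ K)
    (hLK : L ≤ K)
    (μ : ℕ) (hμ : Module.finrank ℚ ↥L = μ)
    (hr : Module.finrank ↥L ↥(IntermediateField.extendScalars hLK) = r)
    (hembs : ∀ φ : ↥K →+* ℂ, φ ≠ algebraMap ↥K ℂ →
      φ ≠ (starRingEnd ℂ).comp (algebraMap ↥K ℂ) → ∀ x : ↥K, (φ x).im = 0)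
    (hbound : ‖γ‖ ≤ 4 * (Real.cos (π / p) + Real.cos (π / q)) ^ 2)
    (b : ↥K) (hb : (b : ℂ) = ((16 * Real.sin (π / p) ^ 2 * Real.sin (π / q) ^ 2 : ℝ) : ℂ))
    (hτ : ∀ τ : ↥K →+* ℝ, -(τ b) / 4 < τ ⟨γ, hγK⟩ ∧ τ ⟨γ, hγK⟩ < 0) :
    (r * μ : ℝ) ≤ 4 * Real.log ((Real.cos (π / p) + Real.cos (π / q)) /
        (Real.sin (π / p) * Real.sin (π / q))) /
      Real.log (4 / ((deltaFn p : ℝ) ^ ((2 : ℝ) / (Nat.totient p : ℝ)) *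
        (deltaFn q : ℝ) ^ ((2 : ℝ) / (Nat.totient q : ℝ)))) :=
  stmt_9_general p q hp hq r γ hγnotreal hγint L K hK hγK hLK μ hμ hr hembs hbound b hb hτ
end

section
/- Let p, q ≥ 3 be integers, L = ℚ(cos(2π/p), cos(2π/q)) ⊆ ℝ with ring of integers R_L, and let γ ∈ ℂ∖ℝ be an algebraic integer with L ⊆ ℚ(γ) and [ℚ(γ) : L] = r. Let m(x) = xʳ + a_{r−1}x^{r−1} + ⋯ + a₀ ∈ R_L[x] be the minimal polynomial of γ over L, set b = 16cos²(π/p)cos²(π/q) ∈ R_L, c = 16cos²(π/p)cos²(π/q)·(4cos²(π/p) + 4cos²(π/q) − 4) ∈ R_L, and define M(y) = (y² − by + c)ʳ + a_{r−1}·b·(y² − by + c)^{r−1} + ⋯ + a₀·bʳ. Then the quadratic polynomial x² − bx + (c − bγ) has a root in ℚ(γ) if and only if M(y) factors over L into a product of two monic polynomials, each of degree r and with all coefficients in R_L. -/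
/-!
Write `Q = X² - bX + c` and `m` for the minimal polynomial of `γ` over `L`. Then `M` is
`(m.scaleRoots b).comp Q`, so `M(w) = bʳ · m(Q(w) / b)`.

If `z ∈ ℚ(γ)` satisfies `Q(z) = bγ`, then `γ = Q(z) / b ∈ L(z)`, so `L(z) = L(γ)`, and the minimal
polynomial of `z` over `L` is a monic factor of `M` of degree `r`. Conversely, if `M = uv` with
`u`, `v` monic of degree `r`, pick any complex `z` with `Q(z) = bγ`: it is a root of `u` or `v`,
so `[L(z) : L] ≤ r = [L(γ) : L]`, and `L(γ) ⊆ L(z)` forces `z ∈ L(γ) = ℚ(γ)`.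

For integrality: each root `w` of `M` satisfies `w² - bw + (c - bt) = 0` with `t = Q(w) / b` a
conjugate of `γ`, so `w` is an algebraic integer, and so is every coefficient of a monic factor.
-/

open scoped Real
open Polynomial IntermediateField

section ScaleRootsComp

variable {R A : Type*} [CommSemiring R] [CommSemiring A] [Algebra R A]

theorem Polynomial.scaleRoots_comp_eq_sum (f Q : R[X]) (b : R) :
    (f.scaleRoots b).comp Q = ∑ i ∈ Finset.range (f.natDegree + 1),
      C (f.coeff i * b ^ (f.natDegree - i)) * Q ^ i := by
  rw [comp, eval₂_eq_sum_range, natDegree_scaleRoots]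
  simp only [coeff_scaleRoots]

theorem Polynomial.aeval_scaleRoots_comp {f Q : R[X]} {b : R} {w t : A}
    (h : aeval w Q = algebraMap R A b * t) :
    aeval w ((f.scaleRoots b).comp Q) = algebraMap R A b ^ f.natDegree * aeval t f := by
  rw [aeval_comp, h, aeval_def, aeval_def, scaleRoots_eval₂_mul]

end ScaleRootsComp

section Quadratic

variable {R : Type*} [CommRing R]

theorem Polynomial.monic_X_sq_sub_C_mul_X_add_C (b c : R) : (X ^ 2 - C b * X + C c).Monic := by
  monicity!

theorem Polynomial.natDegree_X_sq_sub_C_mul_X_add_C [Nontrivial R] (b c : R) :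
    (X ^ 2 - C b * X + C c).natDegree = 2 := by
  compute_degree!

theorem Polynomial.Monic.scaleRoots_comp_quadratic [Nontrivial R] {f : R[X]} (hf : f.Monic)
    (b c : R) : ((f.scaleRoots b).comp (X ^ 2 - C b * X + C c)).Monic :=
  ((monic_scaleRoots_iff b).mpr hf).comp (monic_X_sq_sub_C_mul_X_add_C b c)
    (by rw [natDegree_X_sq_sub_C_mul_X_add_C]; norm_num)

theorem Polynomial.natDegree_scaleRoots_comp_quadratic [IsDomain R] (f : R[X]) (b c : R) :
    ((f.scaleRoots b).comp (X ^ 2 - C b * X + C c)).natDegree = 2 * f.natDegree := by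
  rw [natDegree_comp, natDegree_scaleRoots, natDegree_X_sq_sub_C_mul_X_add_C, mul_comm]

theorem IsIntegral.of_sq_sub_mul_add_eq_zero {A : Type*} [CommRing A] [Algebra R A] {b c w : A}
    (hb : IsIntegral R b) (hc : IsIntegral R c) (hw : w ^ 2 - b * w + c = 0) :
    IsIntegral R w := by
  nontriviality A
  refine .of_aeval_monic_of_isIntegral_coeff (monic_X_sq_sub_C_mul_X_add_C b c)
    (by rw [natDegree_X_sq_sub_C_mul_X_add_C]; norm_num) (by simpa [hw] using isIntegral_zero) ?_
  rintro (_ | _ | _ | i) <;>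
    simp [coeff_X, coeff_C, hb.neg, hc, isIntegral_one, isIntegral_zero]

end Quadratic

theorem IsIntegral.of_aeval_minpoly_eq_zero {R K Ω : Type*} [CommRing R] [Field K] [CommRing Ω]
    [Algebra R K] [Algebra K Ω] [Algebra R Ω] [IsScalarTower R K Ω] {γ t : Ω}
    (hγ : IsIntegral R γ) (ht : aeval t (minpoly K γ) = 0) : IsIntegral R t := by
  refine ⟨minpoly R γ, minpoly.monic hγ, ?_⟩
  have hdvd : minpoly K γ ∣ (minpoly R γ).map (algebraMap R K) :=
    minpoly.dvd K γ (by rw [aeval_map_algebraMap, minpoly.aeval])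
  rw [← aeval_def, ← aeval_map_algebraMap K]
  exact aeval_eq_zero_of_dvd_aeval_eq_zero hdvd ht

section QuadraticSubstitution

variable {K Ω : Type*} [Field K] [Field Ω] [Algebra K Ω]

theorem Polynomial.aeval_scaleRoots_comp_quadratic (f : K[X]) {b c : K} {γ w : Ω}
    (hw : w ^ 2 - algebraMap K Ω b * w + (algebraMap K Ω c - algebraMap K Ω b * γ) = 0) :
    aeval w ((f.scaleRoots b).comp (X ^ 2 - C b * X + C c)) =
      algebraMap K Ω b ^ f.natDegree * aeval γ f := by
  apply aeval_scaleRoots_comp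
  simp only [map_add, map_sub, map_mul, map_pow, aeval_X, aeval_C]
  linear_combination hw

theorem mem_adjoin_simple_of_sq_sub_mul_add_eq_zero {b : K} (hb : b ≠ 0) {c : K} {z γ : Ω}
    (h : z ^ 2 - algebraMap K Ω b * z + (algebraMap K Ω c - algebraMap K Ω b * γ) = 0) :
    γ ∈ K⟮z⟯ := by
  have hb' : algebraMap K Ω b ≠ 0 := (_root_.map_ne_zero _).mpr hb
  have hγ : γ = (algebraMap K Ω b)⁻¹ * (z ^ 2 - algebraMap K Ω b * z + algebraMap K Ω c) := by
    field_simp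
    linear_combination -h
  have hz := mem_adjoin_simple_self K z
  rw [hγ]
  exact mul_mem (inv_mem (IntermediateField.algebraMap_mem _ b))
    (add_mem (sub_mem (pow_mem hz 2) (mul_mem (IntermediateField.algebraMap_mem _ b) hz))
      (IntermediateField.algebraMap_mem _ c))

theorem mem_adjoin_simple_of_aeval_eq_zero {z γ : Ω} (hγ : IsIntegral K γ) (hmem : γ ∈ K⟮z⟯)
    {f : K[X]} (hf : f.Monic) (hdeg : f.natDegree ≤ (minpoly K γ).natDegree)
    (hfz : aeval z f = 0) : z ∈ K⟮γ⟯ := by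
  have hz : IsIntegral K z := ⟨f, hf, hfz⟩
  have := adjoin.finiteDimensional hz
  have hle : (minpoly K z).natDegree ≤ (minpoly K γ).natDegree :=
    (natDegree_le_of_dvd (minpoly.dvd K z hfz) hf.ne_zero).trans hdeg
  rw [eq_of_le_of_finrank_le (adjoin_simple_le_iff.mpr hmem)
    (by rwa [adjoin.finrank hz, adjoin.finrank hγ])]
  exact mem_adjoin_simple_self K z

theorem exists_monic_factors_of_mem_adjoin_simple {γ : Ω} (hγ : IsIntegral K γ) {b : K}
    (hb : b ≠ 0) {c : K} {z : Ω} (hzγ : z ∈ K⟮γ⟯)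
    (hz : z ^ 2 - algebraMap K Ω b * z + (algebraMap K Ω c - algebraMap K Ω b * γ) = 0) :
    ∃ u v : K[X], u.Monic ∧ v.Monic ∧ u.natDegree = (minpoly K γ).natDegree ∧
      v.natDegree = (minpoly K γ).natDegree ∧
      ((minpoly K γ).scaleRoots b).comp (X ^ 2 - C b * X + C c) = u * v := by
  have := adjoin.finiteDimensional hγ
  have hzK : IsIntegral K z := isIntegral_iff.mp (IsIntegral.of_finite K (⟨z, hzγ⟩ : K⟮γ⟯))
  have hadj : K⟮z⟯ = K⟮γ⟯ := le_antisymm (adjoin_simple_le_iff.mpr hzγ)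
    (adjoin_simple_le_iff.mpr (mem_adjoin_simple_of_sq_sub_mul_add_eq_zero hb hz))
  have hdeg : (minpoly K z).natDegree = (minpoly K γ).natDegree := by
    rw [← adjoin.finrank hzK, ← adjoin.finrank hγ, hadj]
  obtain ⟨v, hv⟩ := minpoly.dvd K z (p := ((minpoly K γ).scaleRoots b).comp (X ^ 2 - C b * X + C c))
    (by rw [aeval_scaleRoots_comp_quadratic _ hz, minpoly.aeval, mul_zero])
  have hvmonic : v.Monic :=
    (minpoly.monic hzK).of_mul_monic_left (hv ▸ (minpoly.monic hγ).scaleRoots_comp_quadratic b c)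
  refine ⟨_, v, minpoly.monic hzK, hvmonic, hdeg, ?_, hv⟩
  have hMdeg := congrArg natDegree hv
  rw [natDegree_scaleRoots_comp_quadratic, (minpoly.monic hzK).natDegree_mul hvmonic, hdeg] at hMdeg
  omega

theorem exists_mem_adjoin_simple_of_monic_factors [IsAlgClosed Ω] {γ : Ω} (hγ : IsIntegral K γ)
    {b : K} (hb : b ≠ 0) {c : K} {u v : K[X]} (hu : u.Monic) (hv : v.Monic)
    (hur : u.natDegree = (minpoly K γ).natDegree) (hvr : v.natDegree = (minpoly K γ).natDegree)
    (huv : ((minpoly K γ).scaleRoots b).comp (X ^ 2 - C b * X + C c) = u * v) :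
    ∃ z ∈ K⟮γ⟯,
      z ^ 2 - algebraMap K Ω b * z + (algebraMap K Ω c - algebraMap K Ω b * γ) = 0 := by
  set b' := algebraMap K Ω b
  obtain ⟨z, hz⟩ := IsAlgClosed.exists_root (X ^ 2 - C b' * X + C (algebraMap K Ω c - b' * γ))
    (by rw [degree_eq_natDegree (monic_X_sq_sub_C_mul_X_add_C _ _).ne_zero,
      natDegree_X_sq_sub_C_mul_X_add_C]; norm_num)
  replace hz : z ^ 2 - b' * z + (algebraMap K Ω c - b' * γ) = 0 := by simpa using hz
  have hmem := mem_adjoin_simple_of_sq_sub_mul_add_eq_zero hb hz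
  have huvz : aeval z u * aeval z v = 0 := by
    rw [← map_mul, ← huv, aeval_scaleRoots_comp_quadratic _ hz, minpoly.aeval, mul_zero]
  rcases mul_eq_zero.mp huvz with h | h
  · exact ⟨z, mem_adjoin_simple_of_aeval_eq_zero hγ hmem hu hur.le h, hz⟩
  · exact ⟨z, mem_adjoin_simple_of_aeval_eq_zero hγ hmem hv hvr.le h, hz⟩

theorem exists_sq_sub_mul_add_eq_zero_mem_adjoin_simple_iff [IsAlgClosed Ω] {γ : Ω}
    (hγ : IsIntegral K γ) {b : K} (hb : b ≠ 0) (c : K) :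
    (∃ z ∈ K⟮γ⟯,
      z ^ 2 - algebraMap K Ω b * z + (algebraMap K Ω c - algebraMap K Ω b * γ) = 0) ↔
    ∃ u v : K[X], u.Monic ∧ v.Monic ∧ u.natDegree = (minpoly K γ).natDegree ∧
      v.natDegree = (minpoly K γ).natDegree ∧
      ((minpoly K γ).scaleRoots b).comp (X ^ 2 - C b * X + C c) = u * v := by
  constructor
  · rintro ⟨z, hzγ, hz⟩
    exact exists_monic_factors_of_mem_adjoin_simple hγ hb hzγ hz
  · rintro ⟨u, v, hu, hv, hur, hvr, huv⟩
    exact exists_mem_adjoin_simple_of_monic_factors hγ hb hu hv hur hvr huv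

end QuadraticSubstitution

section Integrality

variable {R K Ω : Type*} [CommRing R] [Field K] [Field Ω] [Algebra R K] [Algebra K Ω]
  [Algebra R Ω] [IsScalarTower R K Ω]

theorem IsIntegral.of_aeval_scaleRoots_comp_minpoly_eq_zero {b c : K} (hb0 : b ≠ 0)
    (hb : IsIntegral R b) (hc : IsIntegral R c) {γ w : Ω} (hγ : IsIntegral R γ)
    (hw : aeval w (((minpoly K γ).scaleRoots b).comp (X ^ 2 - C b * X + C c)) = 0) :
    IsIntegral R w := by
  set b' := algebraMap K Ω b
  have hb' : b' ≠ 0 := (_root_.map_ne_zero _).mpr hb0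
  set t := (w ^ 2 - b' * w + algebraMap K Ω c) / b'
  have hwt : w ^ 2 - b' * w + (algebraMap K Ω c - b' * t) = 0 := by
    simp only [t]; field_simp; ring
  have ht : aeval t (minpoly K γ) = 0 := by
    rw [aeval_scaleRoots_comp_quadratic _ hwt] at hw
    exact (mul_eq_zero.mp hw).resolve_left (pow_ne_zero _ hb')
  exact .of_sq_sub_mul_add_eq_zero hb.algebraMap
    (hc.algebraMap.sub (hb.algebraMap.mul (.of_aeval_minpoly_eq_zero hγ ht))) hwt

theorem isIntegral_coeff_of_monic_dvd_scaleRoots_comp_minpoly [IsAlgClosed Ω] {b c : K}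
    (hb0 : b ≠ 0) (hb : IsIntegral R b) (hc : IsIntegral R c) {γ : Ω} (hγ : IsIntegral R γ)
    {f : K[X]} (hf : f.Monic)
    (hdvd : f ∣ ((minpoly K γ).scaleRoots b).comp (X ^ 2 - C b * X + C c)) (i : ℕ) :
    IsIntegral R (f.coeff i) := by
  rw [← isIntegral_algebraMap_iff (algebraMap K Ω).injective, ← coeff_map]
  refine isIntegral_coeff_of_factors _ (by simp [hf.map, isIntegral_one]) (IsAlgClosed.splits _)
    (fun x hx ↦ ?_) i
  refine .of_aeval_scaleRoots_comp_minpoly_eq_zero hb0 hb hc hγ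
    (aeval_eq_zero_of_dvd_aeval_eq_zero hdvd ?_)
  rwa [aeval_def, eval₂_eq_eval_map]

end Integrality

theorem isIntegral_two_mul_cos_pi_div (n : ℕ) : IsIntegral ℤ (2 * Real.cos (π / n)) := by
  simpa [div_eq_inv_mul] using Real.isIntegral_two_mul_cos_rat_mul_pi (n : ℚ)⁻¹

theorem cos_pi_div_pos {n : ℕ} (hn : 2 < n) : 0 < Real.cos (π / n) := by
  have hn' : (2 : ℝ) < n := by exact_mod_cast hn
  apply Real.cos_pos_of_mem_Ioo
  constructor
  · linarith [div_pos Real.pi_pos (by linarith : (0 : ℝ) < n), Real.pi_pos]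
  · exact div_lt_div_of_pos_left Real.pi_pos two_pos hn'

theorem isIntegral_of_coe_eq_ofReal {F : Type*} [Field F] [Algebra F ℂ]
    {L : IntermediateField F ℂ} {a : L} {x : ℝ} (ha : (a : ℂ) = x) (hx : IsIntegral ℤ x) :
    IsIntegral ℤ a := by
  rw [← isIntegral_algebraMap_iff (algebraMap L ℂ).injective,
    IntermediateField.algebraMap_apply, ha]
  exact hx.algebraMap

theorem stmt_10_general (p q : ℕ) (hp : 3 ≤ p) (hq : 3 ≤ q)
    (L : IntermediateField ℚ ℂ)
    (γ : ℂ) (hγint : IsIntegral ℤ γ)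
    (hLγ : L ≤ IntermediateField.adjoin ℚ {γ})
    (r : ℕ) (hr : (minpoly ↥L γ).natDegree = r)
    (b c : ↥L)
    (hb : (b : ℂ) = ((16 * Real.cos (π / p) ^ 2 * Real.cos (π / q) ^ 2 : ℝ) : ℂ))
    (hc : (c : ℂ) = ((16 * Real.cos (π / p) ^ 2 * Real.cos (π / q) ^ 2 *
      (4 * Real.cos (π / p) ^ 2 + 4 * Real.cos (π / q) ^ 2 - 4) : ℝ) : ℂ))
    (M : Polynomial ↥L)
    (hM : M = ∑ i ∈ Finset.range (r + 1),
      Polynomial.C ((minpoly ↥L γ).coeff i * b ^ (r - i)) *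
        (Polynomial.X ^ 2 - Polynomial.C b * Polynomial.X + Polynomial.C c) ^ i) :
    (∃ z ∈ IntermediateField.adjoin ℚ {γ},
        z ^ 2 - (b : ℂ) * z + ((c : ℂ) - (b : ℂ) * γ) = 0) ↔
    (∃ u v : Polynomial ↥L, u.Monic ∧ v.Monic ∧ u.natDegree = r ∧ v.natDegree = r ∧
      (∀ i, IsIntegral ℤ (u.coeff i)) ∧ (∀ i, IsIntegral ℤ (v.coeff i)) ∧ M = u * v) := by
  subst hr hM
  rw [← scaleRoots_comp_eq_sum]
  have hb0 : b ≠ 0 := fun h ↦ by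
    rw [h, ZeroMemClass.coe_zero, eq_comm, Complex.ofReal_eq_zero] at hb
    have := cos_pi_div_pos hp
    have := cos_pi_div_pos hq
    exact (by positivity : (0 : ℝ) < _).ne' hb
  have h2p := isIntegral_two_mul_cos_pi_div p
  have h2q := isIntegral_two_mul_cos_pi_div q
  have hbZ : IsIntegral ℤ b := isIntegral_of_coe_eq_ofReal (hb.trans (by push_cast; ring))
    ((h2p.pow 2).mul (h2q.pow 2))
  have hcZ : IsIntegral ℤ c := isIntegral_of_coe_eq_ofReal (hc.trans (by push_cast; ring))
    (((h2p.pow 2).mul (h2q.pow 2)).mul (((h2p.pow 2).add (h2q.pow 2)).sub (isIntegral_natCast 4)))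
  have hadj : restrictScalars ℚ L⟮γ⟯ = ℚ⟮γ⟯ :=
    (restrictScalars_adjoin_eq_sup ℚ L {γ}).trans (sup_eq_right.mpr hLγ)
  rw [← hadj]
  refine (exists_sq_sub_mul_add_eq_zero_mem_adjoin_simple_iff (Ω := ℂ) hγint.tower_top hb0 c).trans
    ⟨fun ⟨u, v, hu, hv, hur, hvr, huv⟩ ↦ ⟨u, v, hu, hv, hur, hvr, ?_, ?_, huv⟩,
      fun ⟨u, v, hu, hv, hur, hvr, _, _, huv⟩ ↦ ⟨u, v, hu, hv, hur, hvr, huv⟩⟩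
  · exact isIntegral_coeff_of_monic_dvd_scaleRoots_comp_minpoly hb0 hbZ hcZ hγint hu
      (huv ▸ dvd_mul_right u v)
  · exact isIntegral_coeff_of_monic_dvd_scaleRoots_comp_minpoly hb0 hbZ hcZ hγint hv
      (huv ▸ dvd_mul_left v u)

/-- The quadratic x² − bx + (c − bγ) has a root in ℚ(γ) iff M(y) factors over L
into two monic degree-r factors with algebraic-integer coefficients. -/
theorem stmt_10 (p q : ℕ) (hp : 3 ≤ p) (hq : 3 ≤ q)
    (L : IntermediateField ℚ ℂ)
    (hL : L = IntermediateField.adjoin ℚ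
      {((Real.cos (2 * π / p) : ℝ) : ℂ), ((Real.cos (2 * π / q) : ℝ) : ℂ)})
    (γ : ℂ) (hγnotreal : γ.im ≠ 0) (hγint : IsIntegral ℤ γ)
    (hLγ : L ≤ IntermediateField.adjoin ℚ {γ})
    (r : ℕ) (hr : (minpoly ↥L γ).natDegree = r)
    (b c : ↥L)
    (hb : (b : ℂ) = ((16 * Real.cos (π / p) ^ 2 * Real.cos (π / q) ^ 2 : ℝ) : ℂ))
    (hc : (c : ℂ) = ((16 * Real.cos (π / p) ^ 2 * Real.cos (π / q) ^ 2 *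
      (4 * Real.cos (π / p) ^ 2 + 4 * Real.cos (π / q) ^ 2 - 4) : ℝ) : ℂ))
    (M : Polynomial ↥L)
    (hM : M = ∑ i ∈ Finset.range (r + 1),
      Polynomial.C ((minpoly ↥L γ).coeff i * b ^ (r - i)) *
        (Polynomial.X ^ 2 - Polynomial.C b * Polynomial.X + Polynomial.C c) ^ i) :
    (∃ z ∈ IntermediateField.adjoin ℚ {γ},
        z ^ 2 - (b : ℂ) * z + ((c : ℂ) - (b : ℂ) * γ) = 0) ↔
    (∃ u v : Polynomial ↥L, u.Monic ∧ v.Monic ∧ u.natDegree = r ∧ v.natDegree = r ∧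
      (∀ i, IsIntegral ℤ (u.coeff i)) ∧ (∀ i, IsIntegral ℤ (v.coeff i)) ∧ M = u * v) :=
  stmt_10_general p q hp hq L γ hγint hLγ r hr b c hb hc M hM
end

section
/- Let A, H ∈ SL(2,ℂ) with tr H = 0. Then γ(A, HAH⁻¹) = γ(H,A)·(γ(H,A) − β(A)), i.e. tr(A·(HAH⁻¹)·A⁻¹·(HAH⁻¹)⁻¹) − 2 = (tr(HAH⁻¹A⁻¹) − 2)·((tr(HAH⁻¹A⁻¹) − 2) − ((tr A)² − 4)). -/
/-! Put `B = H A H⁻¹`. Then `tr B = tr A =: t` and `H A H⁻¹ A⁻¹ = B A⁻¹`, so the SL₂ relation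
`tr (X Y⁻¹) = tr X tr Y - tr (X Y)` gives `γ(H, A) = t² - x - 2` with `x = tr (A B)`, while
Fricke's identity gives `γ(A, B) = 2t² + x² - t²x - 4`. The claim is then a polynomial identity
in `t` and `x`. -/

open scoped MatrixGroups

namespace Matrix

variable {R : Type*} [CommRing R]

theorem adjugate_fin_two_eq_trace_smul_sub (A : Matrix (Fin 2) (Fin 2) R) :
    adjugate A = trace A • 1 - A := by
  ext i j
  fin_cases i <;> fin_cases j <;> simp [adjugate_fin_two, trace_fin_two]

theorem sq_fin_two_eq_trace_smul_sub_det_smul (A : Matrix (Fin 2) (Fin 2) R) :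
    A ^ 2 = trace A • A - det A • 1 := by
  have hCH := mul_adjugate A
  rw [adjugate_fin_two_eq_trace_smul_sub, mul_sub, mul_smul_comm, mul_one] at hCH
  rw [← hCH, sq]
  abel

namespace SpecialLinearGroup

local notation:1024 "↑ₘ" A:1024 => ((A : SL(2, R)) : Matrix (Fin 2) (Fin 2) R)

variable (A B : SL(2, R))

theorem coe_inv_fin_two : ↑ₘ(A⁻¹) = trace ↑ₘA • 1 - ↑ₘA := by
  rw [coe_inv, adjugate_fin_two_eq_trace_smul_sub]

theorem sq_fin_two : ↑ₘA ^ 2 = trace ↑ₘA • ↑ₘA - 1 := by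
  rw [sq_fin_two_eq_trace_smul_sub_det_smul, det_coe, one_smul]

theorem trace_coe_conj : trace ↑ₘ(B * A * B⁻¹) = trace ↑ₘA := by
  rw [coe_mul, coe_mul, trace_mul_cycle, ← coe_mul, inv_mul_cancel, coe_one, one_mul]

theorem trace_coe_mul_comm : trace ↑ₘ(A * B) = trace ↑ₘ(B * A) := by
  rw [coe_mul, coe_mul, trace_mul_comm]

theorem trace_mul_inv_fin_two :
    trace ↑ₘ(A * B⁻¹) = trace ↑ₘA * trace ↑ₘB - trace ↑ₘ(A * B) := by
  rw [coe_mul, coe_inv_fin_two, mul_sub, mul_smul_comm, mul_one, trace_sub, trace_smul,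
    smul_eq_mul, mul_comm, coe_mul]

theorem trace_sq_mul_sq_fin_two :
    trace (↑ₘA ^ 2 * ↑ₘB ^ 2) =
      trace ↑ₘA * trace ↑ₘB * trace ↑ₘ(A * B) - trace ↑ₘA ^ 2 - trace ↑ₘB ^ 2 + 2 := by
  rw [sq_fin_two, sq_fin_two]
  simp only [sub_mul, mul_sub, smul_mul_smul_comm, mul_smul, one_mul, mul_one,
    trace_sub, trace_smul, trace_one, coe_mul, smul_eq_mul, Fintype.card_fin]
  push_cast
  ring

/-- Fricke's trace identity for the commutator in `SL(2, R)`. -/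
theorem trace_commutator_fin_two_s11 :
    trace ↑ₘ(A * B * A⁻¹ * B⁻¹) =
      trace ↑ₘA ^ 2 + trace ↑ₘB ^ 2 + trace ↑ₘ(A * B) ^ 2
        - trace ↑ₘA * trace ↑ₘB * trace ↑ₘ(A * B) - 2 := by
  have hcomm : A * B * A⁻¹ * B⁻¹ = A * B * (B * A)⁻¹ := by group
  have hcycle : trace ↑ₘ(A * B * (B * A)) = trace (↑ₘA ^ 2 * ↑ₘB ^ 2) := by
    simp only [coe_mul, sq, ← Matrix.mul_assoc]
    rw [trace_mul_cycle]
    simp only [Matrix.mul_assoc]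
  rw [hcomm, trace_mul_inv_fin_two, hcycle, trace_coe_mul_comm B A, trace_sq_mul_sq_fin_two]
  ring

end SpecialLinearGroup

end Matrix

open Matrix.SpecialLinearGroup

theorem stmt_11_general (A H : Matrix.SpecialLinearGroup (Fin 2) ℂ) :
    Matrix.trace ((A * (H * A * H⁻¹) * A⁻¹ * (H * A * H⁻¹)⁻¹ :
        Matrix.SpecialLinearGroup (Fin 2) ℂ) : Matrix (Fin 2) (Fin 2) ℂ) - 2 =
      (Matrix.trace ((H * A * H⁻¹ * A⁻¹ : Matrix.SpecialLinearGroup (Fin 2) ℂ) :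
          Matrix (Fin 2) (Fin 2) ℂ) - 2) *
      ((Matrix.trace ((H * A * H⁻¹ * A⁻¹ : Matrix.SpecialLinearGroup (Fin 2) ℂ) :
          Matrix (Fin 2) (Fin 2) ℂ) - 2) -
        ((Matrix.trace (A : Matrix (Fin 2) (Fin 2) ℂ)) ^ 2 - 4)) := by
  rw [trace_commutator_fin_two_s11, trace_mul_inv_fin_two (H * A * H⁻¹) A,
    trace_coe_mul_comm (H * A * H⁻¹) A, trace_coe_conj A H]
  ring

/-- For A, H ∈ SL(2,ℂ) with tr H = 0,
γ(A, HAH⁻¹) = γ(H,A)·(γ(H,A) − β(A)). -/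
theorem stmt_11 (A H : Matrix.SpecialLinearGroup (Fin 2) ℂ)
    (hH : Matrix.trace (H : Matrix (Fin 2) (Fin 2) ℂ) = 0) :
    Matrix.trace ((A * (H * A * H⁻¹) * A⁻¹ * (H * A * H⁻¹)⁻¹ :
        Matrix.SpecialLinearGroup (Fin 2) ℂ) : Matrix (Fin 2) (Fin 2) ℂ) - 2 =
      (Matrix.trace ((H * A * H⁻¹ * A⁻¹ : Matrix.SpecialLinearGroup (Fin 2) ℂ) :
          Matrix (Fin 2) (Fin 2) ℂ) - 2) *
      ((Matrix.trace ((H * A * H⁻¹ * A⁻¹ : Matrix.SpecialLinearGroup (Fin 2) ℂ) :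
          Matrix (Fin 2) (Fin 2) ℂ) - 2) -
        ((Matrix.trace (A : Matrix (Fin 2) (Fin 2) ℂ)) ^ 2 - 4)) :=
  stmt_11_general A H
end

section
/- Let B < 0 be a real number and let y₁, y₂, y₃, y₄ be real numbers with B < y₄ ≤ y₃ ≤ y₂ ≤ y₁ < 0. Set c₀ = y₁y₂y₃y₄ and c₁ = −c₀·(1/y₁ + 1/y₂ + 1/y₃ + 1/y₄). Then c₁ ≤ c₀·[ (−B)³/c₀ + ((−B)²/c₀)^{1/2} + ((−B)/c₀)^{1/3} + (1/c₀)^{1/4} ]. -/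
/-! With `aᵢ = -yᵢ` and `M = -B` we have `0 < a₁ ≤ a₂ ≤ a₃ ≤ a₄ < M`, `c₀ = a₁a₂a₃a₄` and
`c₁ = c₀ (1/a₁ + 1/a₂ + 1/a₃ + 1/a₄)`, so it suffices to bound each `1/aₖ` by the `k`-th term.
Bounding the factors before `aₖ` by `aₖ` and those after it by `M` gives `c₀ ≤ M ^ (4 - k) aₖ ^ k`,
which is `1/aₖ ≤ (M ^ (4 - k) / c₀) ^ (1/k)`. -/

lemma one_div_le_rpow_of_le_mul_pow {x c K : ℝ} {k : ℕ} (hk : k ≠ 0) (hx : 0 < x) (hc : 0 < c)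
    (h : c ≤ K * x ^ k) : 1 / x ≤ (K / c) ^ ((1 : ℝ) / k) := by
  have hK : 0 < K := pos_of_mul_pos_left (hc.trans_le h) (pow_pos hx k).le
  rw [one_div (k : ℝ), Real.le_rpow_inv_iff_of_pos (by positivity) (by positivity) (by positivity),
    Real.rpow_natCast, div_pow, one_pow, div_le_div_iff₀ (pow_pos hx k) hc]
  linarith

lemma sum_one_div_le_of_sorted {a₁ a₂ a₃ a₄ M : ℝ} (h₁ : 0 < a₁) (h₁₂ : a₁ ≤ a₂) (h₂₃ : a₂ ≤ a₃)
    (h₃₄ : a₃ ≤ a₄) (h₄ : a₄ ≤ M) :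
    1 / a₁ + 1 / a₂ + 1 / a₃ + 1 / a₄ ≤
      M ^ 3 / (a₁ * a₂ * a₃ * a₄) + (M ^ 2 / (a₁ * a₂ * a₃ * a₄)) ^ ((1 : ℝ) / 2) +
        (M / (a₁ * a₂ * a₃ * a₄)) ^ ((1 : ℝ) / 3) + (1 / (a₁ * a₂ * a₃ * a₄)) ^ ((1 : ℝ) / 4) := by
  have h₂ : 0 < a₂ := h₁.trans_le h₁₂
  have h₃ : 0 < a₃ := h₂.trans_le h₂₃
  have h₄' : 0 < a₄ := h₃.trans_le h₃₄
  have hM : 0 < M := h₄'.trans_le h₄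
  have hc : 0 < a₁ * a₂ * a₃ * a₄ := by positivity
  have t₁ : 1 / a₁ ≤ M ^ 3 / (a₁ * a₂ * a₃ * a₄) := by
    rw [div_le_div_iff₀ h₁ hc]
    calc 1 * (a₁ * a₂ * a₃ * a₄) = a₂ * a₃ * a₄ * a₁ := by ring
      _ ≤ M * M * M * a₁ := by gcongr <;> linarith
      _ = M ^ 3 * a₁ := by ring
  have t₂ := one_div_le_rpow_of_le_mul_pow (k := 2) (K := M ^ 2) two_ne_zero h₂ hc <|
    calc a₁ * a₂ * a₃ * a₄ ≤ a₂ * a₂ * M * M := by gcongr; linarith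
      _ = M ^ 2 * a₂ ^ 2 := by ring
  have t₃ := one_div_le_rpow_of_le_mul_pow (k := 3) (K := M) three_ne_zero h₃ hc <|
    calc a₁ * a₂ * a₃ * a₄ ≤ a₃ * a₃ * a₃ * M := by gcongr; linarith
      _ = M * a₃ ^ 3 := by ring
  have t₄ := one_div_le_rpow_of_le_mul_pow (k := 4) (K := 1) four_ne_zero h₄' hc <|
    calc a₁ * a₂ * a₃ * a₄ ≤ a₄ * a₄ * a₄ * a₄ := by gcongr <;> linarith
      _ = 1 * a₄ ^ 4 := by ring
  push_cast at t₂ t₃ t₄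
  linarith

theorem stmt_14_general (B : ℝ) (y₁ y₂ y₃ y₄ : ℝ)
    (h4 : B < y₄) (h43 : y₄ ≤ y₃) (h32 : y₃ ≤ y₂) (h21 : y₂ ≤ y₁) (h1 : y₁ < 0)
    (c₀ c₁ : ℝ)
    (hc₀ : c₀ = y₁ * y₂ * y₃ * y₄)
    (hc₁ : c₁ = -c₀ * (1 / y₁ + 1 / y₂ + 1 / y₃ + 1 / y₄)) :
    c₁ ≤ c₀ * ((-B) ^ 3 / c₀ + ((-B) ^ 2 / c₀) ^ ((1 : ℝ) / 2) +
      ((-B) / c₀) ^ ((1 : ℝ) / 3) + (1 / c₀) ^ ((1 : ℝ) / 4)) := by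
  have hc₀' : c₀ = -y₁ * -y₂ * -y₃ * -y₄ := by rw [hc₀]; ring
  have hc₁' : c₁ = c₀ * (1 / -y₁ + 1 / -y₂ + 1 / -y₃ + 1 / -y₄) := by
    rw [hc₁]; simp only [one_div, inv_neg]; ring
  rw [hc₁', hc₀']
  exact mul_le_mul_of_nonneg_left
    (sum_one_div_le_of_sorted (by linarith) (by linarith) (by linarith) (by linarith) (by linarith))
    (mul_nonneg (mul_nonneg (mul_nonneg (by linarith) (by linarith)) (by linarith)) (by linarith))

/-- Let B < 0 and B < y₄ ≤ y₃ ≤ y₂ ≤ y₁ < 0, c₀ = y₁y₂y₃y₄,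
c₁ = −c₀(1/y₁ + 1/y₂ + 1/y₃ + 1/y₄). Then
c₁ ≤ c₀[(−B)³/c₀ + ((−B)²/c₀)^{1/2} + ((−B)/c₀)^{1/3} + (1/c₀)^{1/4}]. -/
theorem stmt_14 (B : ℝ) (hB : B < 0) (y₁ y₂ y₃ y₄ : ℝ)
    (h4 : B < y₄) (h43 : y₄ ≤ y₃) (h32 : y₃ ≤ y₂) (h21 : y₂ ≤ y₁) (h1 : y₁ < 0)
    (c₀ c₁ : ℝ)
    (hc₀ : c₀ = y₁ * y₂ * y₃ * y₄)
    (hc₁ : c₁ = -c₀ * (1 / y₁ + 1 / y₂ + 1 / y₃ + 1 / y₄)) :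
    c₁ ≤ c₀ * ((-B) ^ 3 / c₀ + ((-B) ^ 2 / c₀) ^ ((1 : ℝ) / 2) +
      ((-B) / c₀) ^ ((1 : ℝ) / 3) + (1 / c₀) ^ ((1 : ℝ) / 4)) :=
  stmt_14_general B y₁ y₂ y₃ y₄ h4 h43 h32 h21 h1 c₀ c₁ hc₀ hc₁
end
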